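/- arXiv:2502.07984 — 6 statements merged into one kernel-verified Lean document; each statement's English description precedes it below -/
import Mathlib

section
/- Let X be a compact Hausdorff space with a continuous action of a finitely generated semigroup S, and let Σ ⊆ S be a finite generating set. Then (X,S) has the pseudo-orbit tracing property if and only if for every entourage U of X there exists an entourage V of X such that every (Σ,V)-pseudo-orbit in X is U-traced by the orbit of some point of X. -/
/-!
A `(Σ, V)`-pseudo-orbit is automatically a `(K, W)`-pseudo-orbit for every finite `K` once `V`
is small enough: writing `k = a * b`, the error of the `k`-step is controlled by the error of
the `b`-step pushed forward by the uniformly continuous map `a • ·` (compactness) composed with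
the error of the `a`-step, so induction along the generation of `S` by `Σ` applies.
-/

open Filter Uniformity

section

variable {S X : Type*} [Semigroup S] [SMul S X]

def IsPseudoOrbit (K : Set S) (V : Set (X × X)) (xs : S → X) : Prop :=
  ∀ k ∈ K, ∀ s : S, (k • xs s, xs (k * s)) ∈ V

variable [IsScalarTower S S X] [UniformSpace X]

theorem eventually_smallSets_isPseudoOrbit_singleton
    (huc : ∀ s : S, UniformContinuous fun x : X => s • x) {Sig : Set S} {k : S}
    (hk : k ∈ Subsemigroup.closure Sig) {W : Set (X × X)} (hW : W ∈ 𝓤 X) :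
    ∀ᶠ V in (𝓤 X).smallSets, ∀ xs : S → X,
      IsPseudoOrbit Sig V xs → IsPseudoOrbit {k} W xs := by
  induction hk using Subsemigroup.closure_induction generalizing W with
  | mem σ hσ =>
    refine eventually_smallSets.2 ⟨W, hW, fun V hVW xs hxs k hk s => ?_⟩
    rw [Set.mem_singleton_iff.1 hk]
    exact hVW (hxs σ hσ s)
  | mul a b _ _ iha ihb =>
    obtain ⟨W', hW', hW'W⟩ := comp_mem_uniformity_sets hW
    filter_upwards [iha hW', ihb (huc a hW')] with V haV hbV xs hxs k hk s
    rw [Set.mem_singleton_iff.1 hk, ← smul_eq_mul, smul_assoc, smul_eq_mul, mul_assoc]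
    exact hW'W ⟨a • xs (b * s), hbV xs hxs b rfl s, haV xs hxs a rfl (b * s)⟩

theorem exists_mem_uniformity_isPseudoOrbit
    (huc : ∀ s : S, UniformContinuous fun x : X => s • x) {Sig : Set S} (K : Finset S)
    (hK : ∀ k ∈ K, k ∈ Subsemigroup.closure Sig) {W : Set (X × X)} (hW : W ∈ 𝓤 X) :
    ∃ V ∈ 𝓤 X, ∀ xs : S → X, IsPseudoOrbit Sig V xs → IsPseudoOrbit K W xs := by
  have hall := (eventually_all_finset K).2 fun k hk =>
    eventually_smallSets_isPseudoOrbit_singleton huc (hK k hk) hW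
  obtain ⟨V, hV, hVK⟩ := eventually_smallSets.1 hall
  exact ⟨V, hV, fun xs hxs k hk => hVK V subset_rfl k hk xs hxs k rfl⟩

end

theorem stmt_2_general {S X : Type*} [Semigroup S] [UniformSpace X] [CompactSpace X]
    [SMul S X] [IsScalarTower S S X]
    (hcont : ∀ s : S, Continuous fun x : X => s • x)
    (Sig : Finset S) (hgen : Subsemigroup.closure (Sig : Set S) = ⊤) :
    (∀ U ∈ uniformity X, ∃ K : Finset S, ∃ V ∈ uniformity X,
        ∀ xs : S → X, (∀ k ∈ K, ∀ s : S, (k • xs s, xs (k * s)) ∈ V) →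
          ∃ x : X, ∀ s : S, (s • x, xs s) ∈ U)
    ↔ (∀ U ∈ uniformity X, ∃ V ∈ uniformity X,
        ∀ xs : S → X, (∀ σ ∈ Sig, ∀ s : S, (σ • xs s, xs (σ * s)) ∈ V) →
          ∃ x : X, ∀ s : S, (s • x, xs s) ∈ U) := by
  refine ⟨fun htrace U hU => ?_, fun htrace U hU => ?_⟩
  · obtain ⟨K, W, hW, hKW⟩ := htrace U hU
    have huc s := CompactSpace.uniformContinuous_of_continuous (hcont s)
    obtain ⟨V, hV, hVW⟩ := exists_mem_uniformity_isPseudoOrbit huc (Sig := Sig) K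
      (fun k _ => hgen ▸ Subsemigroup.mem_top k) hW
    exact ⟨V, hV, fun xs hxs => hKW xs (hVW xs hxs)⟩
  · obtain ⟨V, hV, hSigV⟩ := htrace U hU
    exact ⟨Sig, V, hV, hSigV⟩

/-- For a finitely generated semigroup `S` with finite generating set `Sig`, the
pseudo-orbit tracing property for `(X,S)` is equivalent to the tracing condition for
`(Sig,V)`-pseudo-orbits. -/
theorem stmt_2 {S X : Type*} [Semigroup S] [UniformSpace X] [CompactSpace X] [T2Space X]
    [SMul S X] [IsScalarTower S S X]
    (hcont : ∀ s : S, Continuous fun x : X => s • x)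
    (Sig : Finset S) (hgen : Subsemigroup.closure (Sig : Set S) = ⊤) :
    (∀ U ∈ uniformity X, ∃ K : Finset S, ∃ V ∈ uniformity X,
        ∀ xs : S → X, (∀ k ∈ K, ∀ s : S, (k • xs s, xs (k * s)) ∈ V) →
          ∃ x : X, ∀ s : S, (s • x, xs s) ∈ U)
    ↔ (∀ U ∈ uniformity X, ∃ V ∈ uniformity X,
        ∀ xs : S → X, (∀ σ ∈ Sig, ∀ s : S, (σ • xs s, xs (σ * s)) ∈ V) →
          ∃ x : X, ∀ s : S, (s • x, xs s) ∈ U) :=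
  stmt_2_general hcont Sig hgen
end

section
/- Let X be a compact Hausdorff space with a continuous action α of a semigroup S which is expansive and has the pseudo-orbit tracing property. Then (X,S,α) is topologically semistable: there exists an entourage W of X and a finite subset K ⊆ S such that for every continuous action β of S on X with (α_k(x), β_k(x)) ∈ W for all k ∈ K and x ∈ X, there exists a continuous map h : X → X with α_s ∘ h = h ∘ β_s for all s ∈ S. -/
/-!
By pseudo-orbit tracing, every `β`-orbit of a small perturbation `β` of `α` is a pseudo-orbit of
`α` and is shadowed by some point; by expansivity the shadowing point is unique. Sending `x` to the
point shadowing its `β`-orbit gives `h`. Shifting the orbit of `x` by `t` is shadowed by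
`α t (h x)`, so uniqueness gives `α t ∘ h = h ∘ β t`; and the graph of `h` is the set of shadowing
pairs, which is closed when the shadowing entourage is closed, so `h` is continuous because `X` is
compact.
-/

open scoped SetRel

theorem continuous_of_isClosed_graph_of_compactSpace {X Y : Type*} [TopologicalSpace X]
    [TopologicalSpace Y] [CompactSpace Y] {f : X → Y}
    (hf : IsClosed {p : X × Y | p.2 = f p.1}) : Continuous f := by
  refine continuous_iff_isClosed.2 fun C hC => ?_
  have hpre : f ⁻¹' C = Prod.fst '' ({p : X × Y | p.2 = f p.1} ∩ Prod.snd ⁻¹' C) := by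
    ext x
    constructor
    · intro hx
      exact ⟨(x, f x), ⟨rfl, hx⟩, rfl⟩
    · rintro ⟨⟨x, y⟩, ⟨hy : y = f x, hyC : y ∈ C⟩, rfl⟩
      exact hy ▸ hyC
  rw [hpre]
  exact isClosedMap_fst_of_compactSpace _ (hf.inter (hC.preimage continuous_snd))

section Shadowing

variable {S X : Type*}

def Shadows (α : S → X → X) (U : SetRel X X) (xs : S → X) (z : X) : Prop :=
  ∀ s, (α s z, xs s) ∈ U

theorem Shadows.mono {α : S → X → X} {U U' : SetRel X X} {xs : S → X} {z : X}
    (h : Shadows α U xs z) (hU : U ⊆ U') : Shadows α U' xs z :=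
  fun s => hU (h s)

theorem Shadows.eq_of_expansive {α : S → X → X} {E W : SetRel X X} {xs : S → X} {z z' : X}
    (hexp : ∀ x y : X, x ≠ y → ∃ s : S, (α s x, α s y) ∉ E)
    (hW : SetRel.IsSymm W) (hWE : W ○ W ⊆ E)
    (hz : Shadows α W xs z) (hz' : Shadows α W xs z') : z = z' := by
  by_contra hne
  obtain ⟨s, hs⟩ := hexp z z' hne
  exact hs (hWE ⟨xs s, hz s, hW.symm _ _ (hz' s)⟩)

theorem Shadows.semiconj [Mul S] {α β : S → X → X} {U : SetRel X X} {x z : X}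
    (hα : ∀ (s t : S) (x : X), α (s * t) x = α s (α t x))
    (hβ : ∀ (s t : S) (x : X), β (s * t) x = β s (β t x))
    (h : Shadows α U (β · x) z) (t : S) : Shadows α U (β · (β t x)) (α t z) := by
  intro s
  show (α s (α t z), β s (β t x)) ∈ U
  rw [← hα, ← hβ]
  exact h (s * t)

theorem isClosed_setOf_shadows [UniformSpace X] {α β : S → X → X} {U : SetRel X X}
    (hα : ∀ s, Continuous (α s)) (hβ : ∀ s, Continuous (β s)) (hU : IsClosed U) :
    IsClosed {p : X × X | Shadows α U (β · p.1) p.2} := by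
  simp only [Shadows, Set.ofPred_forall]
  exact isClosed_iInter fun s =>
    hU.preimage (((hα s).comp continuous_snd).prodMk ((hβ s).comp continuous_fst))

theorem exists_continuous_semiconj_of_existsUnique_shadows [Mul S] [UniformSpace X]
    [CompactSpace X] {α β : S → X → X} {U : SetRel X X}
    (hαact : ∀ (s t : S) (x : X), α (s * t) x = α s (α t x))
    (hβact : ∀ (s t : S) (x : X), β (s * t) x = β s (β t x))
    (hαcont : ∀ s, Continuous (α s)) (hβcont : ∀ s, Continuous (β s)) (hU : IsClosed U)
    (hshadow : ∀ x, ∃! z, Shadows α U (β · x) z) :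
    ∃ h : X → X, Continuous h ∧ ∀ (s : S) (x : X), α s (h x) = h (β s x) := by
  choose h hh huniq using hshadow
  have hgraph : {p : X × X | p.2 = h p.1} = {p : X × X | Shadows α U (β · p.1) p.2} := by
    ext ⟨x, z⟩
    simp only [Set.mem_ofPred_eq]
    exact ⟨by rintro rfl; exact hh x, huniq x z⟩
  refine ⟨h, continuous_of_isClosed_graph_of_compactSpace ?_, fun t x => ?_⟩
  · rw [hgraph]
    exact isClosed_setOf_shadows hαcont hβcont hU
  · exact huniq _ _ ((hh x).semiconj hαact hβact t)

end Shadowing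

theorem stmt_3_general {S X : Type*} [Semigroup S] [UniformSpace X] [CompactSpace X]
    (α : S → X → X) (hαact : ∀ (s t : S) (x : X), α (s * t) x = α s (α t x))
    (hαcont : ∀ s : S, Continuous (α s))
    (hexp : ∃ E ∈ uniformity X, ∀ x y : X, x ≠ y → ∃ s : S, (α s x, α s y) ∉ E)
    (hpotp : ∀ U ∈ uniformity X, ∃ K : Finset S, ∃ V ∈ uniformity X,
        ∀ xs : S → X, (∀ k ∈ K, ∀ s : S, (α k (xs s), xs (k * s)) ∈ V) →
          ∃ x : X, ∀ s : S, (α s x, xs s) ∈ U) :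
    ∃ W ∈ uniformity X, ∃ K : Finset S,
      ∀ β : S → X → X, (∀ (s t : S) (x : X), β (s * t) x = β s (β t x)) →
        (∀ s : S, Continuous (β s)) →
        (∀ k ∈ K, ∀ x : X, (α k x, β k x) ∈ W) →
        ∃ h : X → X, Continuous h ∧ ∀ (s : S) (x : X), α s (h x) = h (β s x) := by
  obtain ⟨E, hE, hexpE⟩ := hexp
  obtain ⟨W, hW, hWsymm, hWE⟩ := comp_symm_mem_uniformity_sets hE
  obtain ⟨U, ⟨hU, hUclosed⟩, hUW⟩ := uniformity_hasBasis_closed.mem_iff.1 hW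
  obtain ⟨K, V, hV, htrace⟩ := hpotp U hU
  refine ⟨V, hV, K, fun β hβact hβcont hαβ => ?_⟩
  refine exists_continuous_semiconj_of_existsUnique_shadows hαact hβact hαcont hβcont hUclosed
    fun x => ?_
  have hpseudo : ∀ k ∈ K, ∀ s : S, (α k (β s x), β (k * s) x) ∈ V := fun k hk s =>
    hβact k s x ▸ hαβ k hk (β s x)
  obtain ⟨z, hz⟩ : ∃ z, Shadows α U (β · x) z := htrace _ hpseudo
  exact ⟨z, hz, fun z' hz' =>
    Shadows.eq_of_expansive hexpE hWsymm hWE (hz'.mono hUW) (hz.mono hUW)⟩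

/-- Topological semistability: if a continuous semigroup action `α` of `S` on a compact
Hausdorff space `X` is expansive and has the pseudo-orbit tracing property, then there
exist an entourage `W` and a finite `K ⊆ S` such that every continuous action `β` of `S`
on `X` with `(α_k x, β_k x) ∈ W` for all `k ∈ K`, `x ∈ X` admits a continuous map
`h : X → X` with `α_s ∘ h = h ∘ β_s` for all `s ∈ S`. -/
theorem stmt_3 {S X : Type*} [Semigroup S] [UniformSpace X] [CompactSpace X] [T2Space X]
    (α : S → X → X) (hαact : ∀ (s t : S) (x : X), α (s * t) x = α s (α t x))
    (hαcont : ∀ s : S, Continuous (α s))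
    (hexp : ∃ E ∈ uniformity X, ∀ x y : X, x ≠ y → ∃ s : S, (α s x, α s y) ∉ E)
    (hpotp : ∀ U ∈ uniformity X, ∃ K : Finset S, ∃ V ∈ uniformity X,
        ∀ xs : S → X, (∀ k ∈ K, ∀ s : S, (α k (xs s), xs (k * s)) ∈ V) →
          ∃ x : X, ∀ s : S, (α s x, xs s) ∈ U) :
    ∃ W ∈ uniformity X, ∃ K : Finset S,
      ∀ β : S → X → X, (∀ (s t : S) (x : X), β (s * t) x = β s (β t x)) →
        (∀ s : S, Continuous (β s)) →
        (∀ k ∈ K, ∀ x : X, (α k x, β k x) ∈ W) →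
        ∃ h : X → X, Continuous h ∧ ∀ (s : S) (x : X), α s (h x) = h (β s x) :=
  stmt_3_general α hαact hαcont hexp hpotp
end

section
/- Let S be a semigroup and A a finite set with more than one element. The shift action of S on A^S (with the prodiscrete topology) is expansive if and only if there exists a finite subset K ⊆ S with S = K·S (every element of S factors as k·s with k ∈ K, s ∈ S). -/
open Filter Set Uniformity

theorem Pi.hasBasis_uniformity_of_discreteUniformity {ι : Type*} {α : ι → Type*}
    [∀ i, UniformSpace (α i)] [∀ i, DiscreteUniformity (α i)] :
    (𝓤 (∀ i, α i)).HasBasis (fun F : Set ι => F.Finite)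
      fun F => {p | ∀ i ∈ F, p.1 i = p.2 i} := by
  simp_rw [Pi.uniformity, DiscreteUniformity.eq_principal_setRelId, comap_principal]
  convert hasBasis_iInf_principal_finite _ using 2 with F
  ext p
  simp [SetRel.id]

section Shift

variable {S A : Type*} [Mul S] [UniformSpace A] [DiscreteUniformity A]

/-- If some `s` is not of the form `k * t` with `k` in a finite set `F`, then the constant
configuration and its modification at `s` can never be told apart through `F` after a shift. -/
theorem exists_finset_forall_eq_mul_of_expansive [Nontrivial A] {E : Set ((S → A) × (S → A))}
    (hE : E ∈ 𝓤 (S → A))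
    (hexp : ∀ x y : S → A, x ≠ y → ∃ s : S, (fun t => x (t * s), fun t => y (t * s)) ∉ E) :
    ∃ K : Finset S, ∀ s : S, ∃ k ∈ K, ∃ t : S, s = k * t := by
  classical
  obtain ⟨F, hF, hFE⟩ := Pi.hasBasis_uniformity_of_discreteUniformity.mem_iff.1 hE
  refine ⟨hF.toFinset, fun s => ?_⟩
  by_contra! hs
  obtain ⟨a, b, hab⟩ := exists_pair_ne A
  let x : S → A := fun _ => a
  let y : S → A := Function.update x s b
  have hxy : x ≠ y := fun h => hab (by simpa [x, y] using congrFun h s)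
  obtain ⟨t, ht⟩ := hexp x y hxy
  refine ht (hFE fun i hi => ?_)
  simp [x, y, (hs i (hF.mem_toFinset.2 hi) t).symm]

theorem expansive_of_forall_eq_mul {K : Finset S} (hK : ∀ s : S, ∃ k ∈ K, ∃ t : S, s = k * t) :
    ∃ E ∈ 𝓤 (S → A), ∀ x y : S → A, x ≠ y →
      ∃ s : S, (fun t => x (t * s), fun t => y (t * s)) ∉ E := by
  refine ⟨_, Pi.hasBasis_uniformity_of_discreteUniformity.mem_of_mem K.finite_toSet,
    fun x y hxy => ?_⟩
  obtain ⟨u, hu⟩ := Function.ne_iff.1 hxy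
  obtain ⟨k, hk, t, rfl⟩ := hK u
  exact ⟨t, fun h => hu (h k hk)⟩

end Shift

/-- The shift action of a semigroup `S` on `A^S` (with the prodiscrete topology, `A` a
finite set with more than one element) is expansive iff there is a finite `K ⊆ S` with
`S = K·S`. -/
theorem stmt_6 {S A : Type*} [Semigroup S] [Finite A] [Nontrivial A]
    [UniformSpace A] [DiscreteTopology A] :
    (∃ E ∈ uniformity (S → A), ∀ x y : S → A, x ≠ y →
        ∃ s : S, ((fun t => x (t * s), fun t => y (t * s)) : (S → A) × (S → A)) ∉ E)
    ↔ ∃ K : Finset S, ∀ s : S, ∃ k ∈ K, ∃ t : S, s = k * t :=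
  ⟨fun ⟨_, hE, hexp⟩ => exists_finset_forall_eq_mul_of_expansive hE hexp,
    fun ⟨_, hK⟩ => expansive_of_forall_eq_mul hK⟩
end

section
/- Let M be a monoid and A a finite set. A subshift X ⊆ A^M is of finite type if and only if the dynamical system (X,M) has the pseudo-orbit tracing property. -/
/-!
Over a finite discrete alphabet, the uniformity of `X ⊆ A^M` is generated by agreement on finite
sets of coordinates. If `X` is of finite type with window `W`, a pseudo-orbit `xs` for agreement at
`1` along `K ⊇ W` satisfies `(xs m) k = (xs (k m)) 1` for `k ∈ K`, so the point `m ↦ (xs m) 1`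
has every `W`-window allowed and is shadowed by `xs` on `K`. Conversely, if pseudo-orbits for
agreement on `F` along `K` are traced up to agreement at `1`, then `X` is the shift of finite type
whose allowed patterns are the `X`-patterns on `W = {1} ∪ F ∪ F K`: for `y` with all windows
allowed, points of `X` extending the windows of `y` form such a pseudo-orbit, and any point tracing
it equals `y`.
-/

open Filter Set Uniformity
open scoped Pointwise

section Uniformity

variable {ι A : Type*} [UniformSpace A] [DiscreteUniformity A]

theorem hasBasis_uniformity_pi_of_discreteUniformity :
    (𝓤 (ι → A)).HasBasis (fun _ : Finset ι => True)
      fun F => {p : (ι → A) × (ι → A) | ∀ i ∈ F, p.1 i = p.2 i} := by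
  have h := hasBasis_iInf_principal_finite fun i : ι => {p : (ι → A) × (ι → A) | p.1 i = p.2 i}
  rw [Pi.uniformity]
  simp only [DiscreteUniformity.eq_principal_setRelId, comap_principal]
  refine ⟨fun S => h.mem_iff.trans ⟨?_, ?_⟩⟩
  · rintro ⟨t, ht, htS⟩
    refine ⟨ht.toFinset, trivial, fun p hp => htS ?_⟩
    simpa using hp
  · rintro ⟨F, -, hFS⟩
    refine ⟨F, F.finite_toSet, fun p hp => hFS ?_⟩
    simpa using hp

theorem hasBasis_uniformity_subtype_pi_of_discreteUniformity (X : Set (ι → A)) :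
    (𝓤 X).HasBasis (fun _ : Finset ι => True)
      fun F => {p : X × X | ∀ i ∈ F, p.1.1 i = p.2.1 i} := by
  rw [uniformity_setCoe]
  exact hasBasis_uniformity_pi_of_discreteUniformity.comap _

end Uniformity

section Subshift

variable {M A : Type*} [Monoid M]

def finiteTypeShift (W : Finset M) (P : Set (∀ _ : (W : Set M), A)) : Set (M → A) :=
  {x | ∀ m : M, (fun w : (W : Set M) => x (w.1 * m)) ∈ P}

theorem subset_finiteTypeShift_domRestrict_image {X : Set (M → A)}
    (hinv : ∀ (m : M) (x : M → A), x ∈ X → (fun t => x (t * m)) ∈ X) (W : Finset M) :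
    X ⊆ finiteTypeShift W ((W : Set M).domRestrict '' X) :=
  fun x hx m => ⟨_, hinv m x hx, rfl⟩

theorem exists_local_extensions {X : Set (M → A)} {W : Finset M} {y : M → A}
    (hy : y ∈ finiteTypeShift W ((W : Set M).domRestrict '' X)) :
    ∃ x : M → M → A, (∀ m, x m ∈ X) ∧ ∀ m, ∀ w ∈ W, x m w = y (w * m) := by
  choose x hxX hxy using hy
  exact ⟨x, hxX, fun m w hw => congrFun (hxy m) ⟨w, hw⟩⟩

theorem mem_finiteTypeShift_of_forall_eq_one {W : Finset M} {P : Set (∀ _ : (W : Set M), A)}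
    {xs : M → M → A} (hxs : ∀ m, xs m ∈ finiteTypeShift W P)
    (hglue : ∀ k ∈ W, ∀ m, xs m k = xs (k * m) 1) :
    (fun m => xs m 1) ∈ finiteTypeShift W P := by
  intro m
  convert hxs m 1 using 1
  funext w
  rw [mul_one, hglue w.1 w.2 m]

end Subshift

theorem stmt_10_general {M A : Type*} [Monoid M] [Finite A] [UniformSpace A] [DiscreteTopology A]
    (X : Set (M → A))
    (hinv : ∀ (m : M) (x : M → A), x ∈ X → (fun t => x (t * m)) ∈ X) :
    (∃ (W : Finset M) (P : Set (∀ _ : (W : Set M), A)),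
        X = {x : M → A | ∀ m : M, (fun w : (W : Set M) => x (w.1 * m)) ∈ P})
    ↔ (∀ U ∈ uniformity {x // x ∈ X}, ∃ K : Finset M, ∃ V ∈ uniformity {x // x ∈ X},
        ∀ xs : M → {x // x ∈ X},
          (∀ k ∈ K, ∀ m : M,
            ((⟨fun t => (xs m).1 (t * k), hinv k _ (xs m).2⟩ : {x // x ∈ X}), xs (k * m)) ∈ V) →
          ∃ x : {x // x ∈ X}, ∀ m : M,
            ((⟨fun t => x.1 (t * m), hinv m _ x.2⟩ : {x // x ∈ X}), xs m) ∈ U) := by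
  classical
  have hbasis := hasBasis_uniformity_subtype_pi_of_discreteUniformity X
  have hagree_one := hbasis.mem_of_mem (i := {1}) trivial
  constructor
  · rintro ⟨W, P, hX⟩ U hU
    obtain ⟨F, -, hF⟩ := hbasis.mem_iff.1 hU
    refine ⟨F ∪ W, _, hagree_one, fun xs hpo => ?_⟩
    have hglue : ∀ k ∈ F ∪ W, ∀ m, (xs m).1 k = (xs (k * m)).1 1 := fun k hk m => by
      simpa using hpo k hk m 1 (Finset.mem_singleton_self 1)
    have hy : (fun m => (xs m).1 1) ∈ X :=
      hX.ge <| mem_finiteTypeShift_of_forall_eq_one (fun m => hX.le (xs m).2)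
        fun k hk => hglue k (Finset.mem_union_right F hk)
    exact ⟨⟨_, hy⟩, fun m => hF fun i hi => (hglue i (Finset.mem_union_left W hi) m).symm⟩
  · intro h
    obtain ⟨K, V, hV, htrace⟩ := h _ hagree_one
    obtain ⟨F, -, hF⟩ := hbasis.mem_iff.1 hV
    let W : Finset M := insert 1 (F ∪ F * K)
    refine ⟨W, (W : Set M).domRestrict '' X, ?_⟩
    refine (subset_finiteTypeShift_domRestrict_image hinv W).antisymm fun y hy => ?_
    obtain ⟨x, hxX, hxy⟩ := exists_local_extensions hy
    obtain ⟨z, hz⟩ := htrace (fun m => ⟨x m, hxX m⟩) fun k hk m => hF fun i hi => by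
      change x m (i * k) = x (k * m) i
      rw [hxy m _ (by simp [W, Finset.mul_mem_mul hi hk]), hxy (k * m) i (by simp [W, hi]),
        mul_assoc]
    have hzy : z.1 = y := funext fun m => by
      simpa [hxy m 1 (Finset.mem_insert_self _ _)] using hz m 1 (Finset.mem_singleton_self 1)
    exact hzy ▸ z.2

/-- Let `M` be a monoid and `A` a finite set. A subshift `X ⊆ A^M` is of finite type if
and only if `(X,M)` has the pseudo-orbit tracing property. -/
theorem stmt_10 {M A : Type*} [Monoid M] [Finite A] [UniformSpace A] [DiscreteTopology A]
    (X : Set (M → A)) (hXc : IsClosed X)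
    (hinv : ∀ (m : M) (x : M → A), x ∈ X → (fun t => x (t * m)) ∈ X) :
    (∃ (W : Finset M) (P : Set (∀ _ : (W : Set M), A)),
        X = {x : M → A | ∀ m : M, (fun w : (W : Set M) => x (w.1 * m)) ∈ P})
    ↔ (∀ U ∈ uniformity {x // x ∈ X}, ∃ K : Finset M, ∃ V ∈ uniformity {x // x ∈ X},
        ∀ xs : M → {x // x ∈ X},
          (∀ k ∈ K, ∀ m : M,
            ((⟨fun t => (xs m).1 (t * k), hinv k _ (xs m).2⟩ : {x // x ∈ X}), xs (k * m)) ∈ V) →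
          ∃ x : {x // x ∈ X}, ∀ m : M,
            ((⟨fun t => x.1 (t * m), hinv m _ x.2⟩ : {x // x ∈ X}), xs m) ∈ U) :=
  stmt_10_general X hinv
end

section
/- Let X be a Stone space (compact, Hausdorff, totally disconnected) equipped with an equicontinuous action of a finitely generated monoid M. Then the dynamical system (X,M) has the pseudo-orbit tracing property. -/
open Set

/-- In a Stone space, every entourage contains a reflexive transitive entourage. -/
lemma exists_trans_entourage {X : Type*} [UniformSpace X] [CompactSpace X] [T2Space X]
    [TotallyDisconnectedSpace X] (U : Set (X × X)) (hU : U ∈ uniformity X) :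
    ∃ S ∈ uniformity X, S ⊆ U ∧ (∀ x : X, (x, x) ∈ S) ∧
      (∀ a b c : X, (a, b) ∈ S → (b, c) ∈ S → (a, c) ∈ S) := by
  classical
  obtain ⟨Uo, ⟨hUo, hUoOpen⟩, hUoU⟩ := (uniformity_hasBasis_open (α := X)).mem_iff.mp hU
  -- for each x, a clopen set C x with x ∈ C x and C x ×ˢ C x ⊆ Uo
  have hC : ∀ x : X, ∃ C : Set X, IsClopen C ∧ x ∈ C ∧ C ×ˢ C ⊆ Uo := by
    intro x
    obtain ⟨u, v, hu, hv, hxu, hxv, huv⟩ :=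
      isOpen_prod_iff.mp hUoOpen x x (refl_mem_uniformity hUo)
    obtain ⟨C, hCclo, hxC, hCuv⟩ :=
      isTopologicalBasis_isClopen.exists_subset_of_mem_open (Set.mem_inter hxu hxv)
        (hu.inter hv)
    exact ⟨C, hCclo, hxC, fun p hp =>
      huv ⟨(hCuv hp.1).1, (hCuv hp.2).2⟩⟩
  choose C hCclo hxC hCU using hC
  obtain ⟨t, ht⟩ := isCompact_univ.elim_finite_subcover C (fun x => (hCclo x).2)
    (fun x _ => Set.mem_iUnion.mpr ⟨x, hxC x⟩)
  set S : Set (X × X) := {p | ∀ i ∈ t, (p.1 ∈ C i ↔ p.2 ∈ C i)} with hS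
  refine ⟨S, ?_, ?_, fun x i _ => Iff.rfl, fun a b c hab hbc i hi => (hab i hi).trans (hbc i hi)⟩
  · rw [compactSpace_uniformity]
    rw [Filter.mem_iSup]
    intro x
    set A : Set X := ⋂ i ∈ t, if x ∈ C i then C i else (C i)ᶜ with hA
    have hAopen : IsOpen A := by
      apply isOpen_biInter_finset
      intro i _
      split_ifs
      · exact (hCclo i).2
      · exact (hCclo i).1.isOpen_compl
    have hxA : x ∈ A := by
      simp only [hA, Set.mem_iInter]
      intro i _
      split_ifs with h
      · exact h
      · exact h
    have hmemA : ∀ y ∈ A, ∀ i ∈ t, (y ∈ C i ↔ x ∈ C i) := by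
      intro y hy i hi
      have := Set.mem_iInter.mp (Set.mem_iInter.mp hy i) hi
      split_ifs at this with h
      · exact ⟨fun _ => h, fun _ => this⟩
      · exact ⟨fun hy' => absurd hy' this, fun hx' => absurd hx' h⟩
    refine mem_nhds_iff.mpr ⟨A ×ˢ A, ?_, hAopen.prod hAopen, ⟨hxA, hxA⟩⟩
    intro p hp i hi
    exact (hmemA p.1 hp.1 i hi).trans (hmemA p.2 hp.2 i hi).symm
  · intro p hp
    apply hUoU
    have h1 : p.1 ∈ ⋃ i ∈ t, C i := ht (Set.mem_univ p.1)
    obtain ⟨i, hi, hp1⟩ := Set.mem_iUnion₂.mp h1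
    exact hCU i ⟨hp1, (hp i hi).mp hp1⟩

/-- Every equicontinuous action of a finitely generated monoid on a Stone space has the
pseudo-orbit tracing property. -/
theorem stmt_12 {M X : Type*} [Monoid M] [UniformSpace X] [CompactSpace X] [T2Space X]
    [TotallyDisconnectedSpace X] [MulAction M X]
    (hcont : ∀ m : M, Continuous fun x : X => m • x)
    (hfg : ∃ Sig : Finset M, Submonoid.closure (Sig : Set M) = ⊤)
    (hequi : ∀ U ∈ uniformity X, ∃ V ∈ uniformity X,
        ∀ x y : X, (x, y) ∈ V → ∀ m : M, (m • x, m • y) ∈ U) :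
    ∀ U ∈ uniformity X, ∃ K : Finset M, ∃ V ∈ uniformity X,
      ∀ xs : M → X, (∀ k ∈ K, ∀ m : M, (k • xs m, xs (k * m)) ∈ V) →
        ∃ x : X, ∀ m : M, (m • x, xs m) ∈ U := by
  intro U hU
  obtain ⟨Sig, hSig⟩ := hfg
  obtain ⟨S, hS, hSU, hSrefl, hStrans⟩ := exists_trans_entourage U hU
  obtain ⟨V, hV, hVS⟩ := hequi S hS
  -- the invariant entourage
  set W : Set (X × X) := {p | ∀ m : M, (m • p.1, m • p.2) ∈ S} with hWdef
  have hWmem : W ∈ uniformity X := Filter.mem_of_superset hV (fun p hp m => hVS p.1 p.2 hp m)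
  have hWU : W ⊆ U := fun p hp => by
    have := hp 1
    rw [one_smul, one_smul] at this
    exact hSU this
  have hWrefl : ∀ x : X, (x, x) ∈ W := fun x m => hSrefl _
  have hWtrans : ∀ a b c : X, (a, b) ∈ W → (b, c) ∈ W → (a, c) ∈ W :=
    fun a b c hab hbc m => hStrans _ _ _ (hab m) (hbc m)
  have hWinv : ∀ (k : M) (a b : X), (a, b) ∈ W → (k • a, k • b) ∈ W := by
    intro k a b hab m
    rw [← mul_smul, ← mul_smul]
    exact hab (m * k)
  refine ⟨Sig, W, hWmem, ?_⟩
  intro xs hxs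
  refine ⟨xs 1, fun m => ?_⟩
  have key : ∀ m ∈ Submonoid.closure (Sig : Set M),
      ∀ n : M, (m • xs n, xs (m * n)) ∈ W := by
    intro m hm
    induction hm using Submonoid.closure_induction with
    | mem k hk => exact fun n => hxs k hk n
    | one => intro n; rw [one_smul, one_mul]; exact hWrefl _
    | mul a b _ _ ha hb =>
      intro n
      have h1 : ((a * b) • xs n, a • xs (b * n)) ∈ W := by
        rw [mul_smul]
        exact hWinv a _ _ (hb n)
      have h2 : (a • xs (b * n), xs (a * (b * n))) ∈ W := ha (b * n)
      rw [← mul_assoc] at h2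
      exact hWtrans _ _ _ h1 h2
  have hm : m ∈ Submonoid.closure (Sig : Set M) := by rw [hSig]; trivial
  have := key m hm 1
  rw [mul_one] at this
  exact hWU this
end

section
/- Let S₁, …, S_n (n ≥ 2) be mutually disjoint semigroups, each S_i possessing a left-identity e_i. Let S = S₁ ⊔ ⋯ ⊔ S_n ⊔ {z} with multiplication s*s' = ss' if s,s' lie in the same S_i, and s*s' = z otherwise. Then S is a semigroup, z is a zero element, K = {e₁,…,e_n} satisfies K*S = S, no subset K' ⊆ S with |K'| < n satisfies K'*S = S, and S has no left-identity element. -/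
/-- The multiplication `*` on `S = S₁ ⊔ ⋯ ⊔ S_n ⊔ {z}`: products within the same `S i`
are computed in `S i`, and all other products equal the extra element `z`. -/
def starOp {n : ℕ} (S : Fin n → Type) [∀ i, Semigroup (S i)] :
    ((Σ i, S i) ⊕ Unit) → ((Σ i, S i) ⊕ Unit) → ((Σ i, S i) ⊕ Unit)
  | .inl ⟨i, s⟩, .inl ⟨j, t⟩ => if h : j = i then .inl ⟨i, s * (h ▸ t)⟩ else .inr ()
  | _, _ => .inr ()


lemma starOp_inr_left {n : ℕ} (S : Fin n → Type) [∀ i, Semigroup (S i)] (a) :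
    starOp S (.inr ()) a = .inr () := by cases a <;> rfl

lemma starOp_inr_right {n : ℕ} (S : Fin n → Type) [∀ i, Semigroup (S i)] (a) :
    starOp S a (.inr ()) = .inr () := by
  rcases a with ⟨i, s⟩ | u
  · rfl
  · rfl

lemma starOp_eq_inl {n : ℕ} (S : Fin n → Type) [∀ i, Semigroup (S i)]
    (k b : (Σ i, S i) ⊕ Unit) (i : Fin n) (s : S i)
    (h : starOp S k b = .inl ⟨i, s⟩) : ∃ t : S i, k = .inl ⟨i, t⟩ := by
  rcases k with ⟨j, u⟩ | ⟨⟩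
  · rcases b with ⟨j', v⟩ | ⟨⟩
    · simp only [starOp] at h
      split at h
      · rename_i hj; subst hj
        obtain ⟨hji, -⟩ := Sigma.mk.inj_iff.mp (Sum.inl.inj h)
        subst hji
        exact ⟨u, rfl⟩
      · simp at h
    · rw [starOp_inr_right] at h; simp at h
  · rw [starOp_inr_left] at h; simp at h

/-- Let `S₁, …, S_n` (`n ≥ 2`) be mutually disjoint semigroups, each with a left-identity
`e i`, and let `S = S₁ ⊔ ⋯ ⊔ S_n ⊔ {z}` with the multiplication `starOp`. Then: `starOp`
is associative; `z` is a zero element; `K = {e₁, …, e_n}` satisfies `K * S = S`; no set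
`K'` of cardinality `< n` satisfies `K' * S = S`; and `S` has no left-identity element. -/
theorem stmt_19 {n : ℕ} (hn : 2 ≤ n) (S : Fin n → Type) [∀ i, Semigroup (S i)]
    (e : ∀ i, S i) (he : ∀ (i : Fin n) (t : S i), e i * t = t) :
    (∀ a b c, starOp S (starOp S a b) c = starOp S a (starOp S b c)) ∧
    (∀ a, starOp S (.inr ()) a = .inr () ∧ starOp S a (.inr ()) = .inr ()) ∧
    (∀ a, ∃ i : Fin n, ∃ b, a = starOp S (.inl ⟨i, e i⟩) b) ∧
    (∀ K' : Finset ((Σ i, S i) ⊕ Unit),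
        (∀ a, ∃ k ∈ K', ∃ b, a = starOp S k b) → n ≤ K'.card) ∧
    ¬ ∃ eL, ∀ a, starOp S eL a = a := by
  have h0 : (0 : ℕ) < n := by omega
  refine ⟨?_, ?_, ?_, ?_, ?_⟩
  · -- associativity
    rintro (⟨i, s⟩ | ⟨⟩) b c
    · rcases b with ⟨j, t⟩ | ⟨⟩
      · rcases c with ⟨k, u⟩ | ⟨⟩
        · by_cases hji : j = i
          · subst hji
            by_cases hkj : k = j
            · subst hkj
              simp [starOp, mul_assoc]
            · simp [starOp, hkj]
          · by_cases hkj : k = j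
            · subst hkj
              simp [starOp, hji]
            · simp [starOp, hji, hkj, starOp_inr_left]
        · rw [starOp_inr_right, starOp_inr_right, starOp_inr_right]
      · rw [starOp_inr_right, starOp_inr_left, starOp_inr_right]
    · rw [starOp_inr_left, starOp_inr_left, starOp_inr_left]
  · exact fun a => ⟨starOp_inr_left S a, starOp_inr_right S a⟩
  · rintro (⟨i, s⟩ | ⟨⟩)
    · exact ⟨i, .inl ⟨i, s⟩, by simp [starOp, he]⟩
    · exact ⟨⟨0, h0⟩, .inr (), by rw [starOp_inr_right]⟩
  · intro K' hK
    choose k hk b hb using fun i => hK (.inl ⟨i, e i⟩)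
    have hki : ∀ i, ∃ t : S i, k i = .inl ⟨i, t⟩ :=
      fun i => starOp_eq_inl S (k i) (b i) i (e i) (hb i).symm
    calc n = (Finset.univ : Finset (Fin n)).card := by simp
    _ ≤ K'.card := by
      apply Finset.card_le_card_of_injOn k (fun i _ => hk i)
      intro i _ j _ hij
      obtain ⟨t, ht⟩ := hki i
      obtain ⟨u, hu⟩ := hki j
      rw [ht, hu] at hij
      exact (Sigma.mk.inj_iff.mp (Sum.inl.inj hij)).1
  · rintro ⟨eL, hL⟩
    rcases eL with ⟨i, s⟩ | ⟨⟩
    · set j : Fin n := if i = ⟨0, h0⟩ then ⟨1, hn⟩ else ⟨0, h0⟩ with hj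
      have hji : j ≠ i := by
        rcases eq_or_ne i ⟨0, h0⟩ with h | h
        · subst h; simp only [hj, if_pos rfl]
          intro hh; exact absurd (congrArg Fin.val hh) (by norm_num)
        · simp only [hj, if_neg h]; exact fun hh => h hh.symm
      have := hL (.inl ⟨j, e j⟩)
      simp [starOp, hji] at this
    · have := hL (.inl ⟨⟨0, h0⟩, e ⟨0, h0⟩⟩)
      rw [starOp_inr_left] at this
      simp at this
end
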